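/- Let L = U³ ⊕ ⟨−2⟩ ⊕ ⟨−2⟩, with t and s generators of the two ⟨−2⟩ summands. Every primitive element l ∈ L of divisibility 2 can be written as l = 2w + at + bs with w ∈ U³ and a, b ∈ ℤ not both even, and its square satisfies (l,l) ≡ −2 (mod 8) or (l,l) ≡ −4 (mod 8). In particular, L contains no primitive isotropic element of divisibility 2. -/
import Mathlib


open Matrix

/-- The ℝ-bilinear extension of the integral bilinear form with Gram matrix `M`. -/
def bilinR {ι : Type*} [Fintype ι] (M : Matrix ι ι ℤ) (x y : ι → ℝ) : ℝ :=
  x ⬝ᵥ ((M.map (Int.cast : ℤ → ℝ)) *ᵥ y)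

/-- `w` is a tuple of vectors of `L ⊗ ℝ` spanning a maximal positive definite subspace:
its Gram matrix is positive definite and no longer tuple has positive definite Gram matrix. -/
def IsMaxPosTuple {ι : Type*} [Fintype ι] (M : Matrix ι ι ℤ) {k : ℕ}
    (w : Fin k → ι → ℝ) : Prop :=
  (Matrix.of fun i j => bilinR M (w i) (w j)).PosDef ∧
    ∀ w' : Fin (k + 1) → ι → ℝ,
      ¬ (Matrix.of fun i j => bilinR M (w' i) (w' j)).PosDef

/-- `g` preserves the orientation of the positive cone of the lattice with Gram matrix `M`:
for every basis `w` of a maximal positive definite subspace `W` of `L ⊗ ℝ`, the determinant of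
the matrix `(B(wᵢ, g wⱼ))` (which equals, up to the positive factor `det (Gram w)`, the
determinant of the orthogonal projection of `g|_W` back to `W`) is positive. -/
def OrientPres {ι : Type*} [Fintype ι] (M : Matrix ι ι ℤ) (g : Matrix ι ι ℤ) : Prop :=
  ∀ (k : ℕ) (w : Fin k → ι → ℝ), IsMaxPosTuple M w →
    0 < (Matrix.of fun i j : Fin k =>
          bilinR M (w i) ((g.map (Int.cast : ℤ → ℝ)) *ᵥ w j)).det

/-- `g` is an isometry of the lattice with Gram matrix `M`. -/
def IsIsometry {ι : Type*} [Fintype ι] (M : Matrix ι ι ℤ) (g : Matrix ι ι ℤ) : Prop :=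
  gᵀ * M * g = M

/-- A vector of a lattice is primitive if it is divisible only by units. -/
def IsPrimitiveVec {ι : Type*} (l : ι → ℤ) : Prop :=
  ∀ (c : ℤ) (x : ι → ℤ), l = c • x → IsUnit c

/-- The Gram matrix of the lattice `L = U³ ⊕ ⟨-2⟩ ⊕ ⟨-2⟩`, in the basis
`e₁, f₁, e₂, f₂, e₃, f₃, t, s`. -/
def G8 : Matrix (Fin 8) (Fin 8) ℤ :=
  !![0,1,0,0,0,0,0,0;
     1,0,0,0,0,0,0,0;
     0,0,0,1,0,0,0,0;
     0,0,1,0,0,0,0,0;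
     0,0,0,0,0,1,0,0;
     0,0,0,0,1,0,0,0;
     0,0,0,0,0,0,-2,0;
     0,0,0,0,0,0,0,-2]

/-- The natural embedding `U³ → U³ ⊕ ⟨-2⟩ ⊕ ⟨-2⟩`. -/
def embU3 (w : Fin 6 → ℤ) : Fin 8 → ℤ := ![w 0, w 1, w 2, w 3, w 4, w 5, 0, 0]

/-- The generator `t` of the first `⟨-2⟩` summand. -/
def tv : Fin 8 → ℤ := ![0,0,0,0,0,0,1,0]

/-- The generator `s` of the second `⟨-2⟩` summand. -/
def sv : Fin 8 → ℤ := ![0,0,0,0,0,0,0,1]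


section aux
variable {α : Type*}
lemma v8_5 (a b c d e f g h : α) : ![a,b,c,d,e,f,g,h] 5 = f := rfl
lemma v8_6 (a b c d e f g h : α) : ![a,b,c,d,e,f,g,h] 6 = g := rfl
lemma v8_7 (a b c d e f g h : α) : ![a,b,c,d,e,f,g,h] 7 = h := rfl
lemma v6_4 (a b c d e f : α) : ![a,b,c,d,e,f] 4 = e := rfl
lemma v6_5 (a b c d e f : α) : ![a,b,c,d,e,f] 5 = f := rfl
end aux

lemma pair_eq (l x : Fin 8 → ℤ) : l ⬝ᵥ (G8 *ᵥ x) =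
    l 0 * x 1 + l 1 * x 0 + l 2 * x 3 + l 3 * x 2 + l 4 * x 5 + l 5 * x 4
      - 2 * l 6 * x 6 - 2 * l 7 * x 7 := by
  have h3 : (Fin.succ 2 : Fin 8) = 3 := rfl
  have h4 : ((Fin.succ 2).succ : Fin 8) = 4 := rfl
  have h5 : ((Fin.succ 2).succ.succ : Fin 8) = 5 := rfl
  have h6 : ((Fin.succ 2).succ.succ.succ : Fin 8) = 6 := rfl
  have h7 : ((Fin.succ 2).succ.succ.succ.succ : Fin 8) = 7 := rfl
  simp [G8, Matrix.mulVec, dotProduct, Fin.sum_univ_succ, h3, h4, h5, h6, h7]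
  ring

lemma main_part (l : Fin 8 → ℤ) (hp : IsPrimitiveVec l)
    (hdiv : ∀ x : Fin 8 → ℤ, 2 ∣ l ⬝ᵥ (G8 *ᵥ x)) :
    ((∃ (w : Fin 6 → ℤ) (a b : ℤ), ¬ (2 ∣ a ∧ 2 ∣ b) ∧
        l = (2 : ℤ) • embU3 w + a • tv + b • sv) ∧
      (Int.ModEq 8 (l ⬝ᵥ (G8 *ᵥ l)) (-2) ∨ Int.ModEq 8 (l ⬝ᵥ (G8 *ᵥ l)) (-4))) := by
  have d0 : 2 ∣ l 0 := by
    have := hdiv ![0,1,0,0,0,0,0,0]; rw [pair_eq] at this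
    simpa [v8_5, v8_6, v8_7] using this
  have d1 : 2 ∣ l 1 := by
    have := hdiv ![1,0,0,0,0,0,0,0]; rw [pair_eq] at this
    simpa [v8_5, v8_6, v8_7] using this
  have d2 : 2 ∣ l 2 := by
    have := hdiv ![0,0,0,1,0,0,0,0]; rw [pair_eq] at this
    simpa [v8_5, v8_6, v8_7] using this
  have d3 : 2 ∣ l 3 := by
    have := hdiv ![0,0,1,0,0,0,0,0]; rw [pair_eq] at this
    simpa [v8_5, v8_6, v8_7] using this
  have d4 : 2 ∣ l 4 := by
    have := hdiv ![0,0,0,0,0,1,0,0]; rw [pair_eq] at this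
    simpa [v8_5, v8_6, v8_7] using this
  have d5 : 2 ∣ l 5 := by
    have := hdiv ![0,0,0,0,1,0,0,0]; rw [pair_eq] at this
    simpa [v8_5, v8_6, v8_7] using this
  obtain ⟨c0, e0⟩ := d0
  obtain ⟨c1, e1⟩ := d1
  obtain ⟨c2, e2⟩ := d2
  obtain ⟨c3, e3⟩ := d3
  obtain ⟨c4, e4⟩ := d4
  obtain ⟨c5, e5⟩ := d5
  have hnb : ¬ (2 ∣ l 6 ∧ 2 ∣ l 7) := by
    rintro ⟨⟨c6, e6⟩, ⟨c7, e7⟩⟩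
    have heq : l = (2 : ℤ) • ![c0, c1, c2, c3, c4, c5, c6, c7] := by
      funext i
      fin_cases i <;>
        simp_all [Pi.smul_apply, v8_5, v8_6, v8_7]
    have hu := hp 2 _ heq
    rw [Int.isUnit_iff] at hu
    omega
  refine ⟨⟨![c0, c1, c2, c3, c4, c5], l 6, l 7, hnb, ?_⟩, ?_⟩
  · funext i
    fin_cases i <;> simp_all [embU3, tv, sv, v8_5, v8_6, v8_7, v6_4, v6_5]
  · have hq : l ⬝ᵥ (G8 *ᵥ l) =
        8 * (c0 * c1 + c2 * c3 + c4 * c5) - 2 * (l 6)^2 - 2 * (l 7)^2 := by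
      rw [pair_eq, e0, e1, e2, e3, e4, e5]; ring
    rcases Int.even_or_odd (l 6) with ⟨k, hk⟩ | ⟨k, hk⟩ <;>
      rcases Int.even_or_odd (l 7) with ⟨m, hm⟩ | ⟨m, hm⟩
    · exact absurd ⟨⟨k, by omega⟩, ⟨m, by omega⟩⟩ hnb
    · left
      have key : l ⬝ᵥ (G8 *ᵥ l) =
          8 * (c0 * c1 + c2 * c3 + c4 * c5 - k * k - m * m - m) - 2 := by
        rw [hq, hk, hm]; ring
      unfold Int.ModEq
      omega
    · left
      have key : l ⬝ᵥ (G8 *ᵥ l) =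
          8 * (c0 * c1 + c2 * c3 + c4 * c5 - k * k - k - m * m) - 2 := by
        rw [hq, hk, hm]; ring
      unfold Int.ModEq
      omega
    · right
      have key : l ⬝ᵥ (G8 *ᵥ l) =
          8 * (c0 * c1 + c2 * c3 + c4 * c5 - k * k - k - m * m - m) - 4 := by
        rw [hq, hk, hm]; ring
      unfold Int.ModEq
      omega

/-- Every primitive element `l` of `L = U³ ⊕ ⟨-2⟩ ⊕ ⟨-2⟩` of divisibility `2`
(i.e. the ideal `(l, L)` is `2ℤ`) can be written as `l = 2w + a·t + b·s` with `w ∈ U³` and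
`a, b` not both even, and its square is congruent to `-2` or `-4` modulo `8`.
In particular `L` contains no primitive isotropic element of divisibility `2`. -/
theorem stmt_8 :
    (∀ l : Fin 8 → ℤ, IsPrimitiveVec l →
      (∀ x : Fin 8 → ℤ, 2 ∣ l ⬝ᵥ (G8 *ᵥ x)) → (∃ x : Fin 8 → ℤ, l ⬝ᵥ (G8 *ᵥ x) = 2) →
      ((∃ (w : Fin 6 → ℤ) (a b : ℤ), ¬ (2 ∣ a ∧ 2 ∣ b) ∧
          l = (2 : ℤ) • embU3 w + a • tv + b • sv) ∧
        (Int.ModEq 8 (l ⬝ᵥ (G8 *ᵥ l)) (-2) ∨ Int.ModEq 8 (l ⬝ᵥ (G8 *ᵥ l)) (-4)))) ∧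
    (∀ l : Fin 8 → ℤ, IsPrimitiveVec l → l ⬝ᵥ (G8 *ᵥ l) = 0 →
      ¬ ((∀ x : Fin 8 → ℤ, 2 ∣ l ⬝ᵥ (G8 *ᵥ x)) ∧ (∃ x : Fin 8 → ℤ, l ⬝ᵥ (G8 *ᵥ x) = 2))) := by
  constructor
  · intro l hp hdiv _
    exact main_part l hp hdiv
  · rintro l hp hz ⟨hdiv, -⟩
    obtain ⟨-, h⟩ := main_part l hp hdiv
    rw [hz] at h
    rcases h with h | h <;> (unfold Int.ModEq at h; omega)
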